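/- Let f(x) = x² - x - 3 and ρ(x) = x/(2x - 1). For every real x > -13/4, if y₁ and y₂ are the two real solutions of f(y) = x, then ρ(y₁)·y₁ + ρ(y₂)·y₂ = 1. -/

import Mathlib

/-! Two distinct roots of `y² - y = c` have sum `1` (Vieta), so `2y₁ - 1 = y₁ - y₂` and
`2y₂ - 1 = y₂ - y₁`. The sum then becomes `(y₁² - y₂²) / (y₁ - y₂) = y₁ + y₂ = 1`. -/

theorem add_eq_one_of_sq_sub_self_eq {R : Type*} [CommRing R] [IsDomain R] {a b : R}
    (h : a ^ 2 - a = b ^ 2 - b) (hne : a ≠ b) : a + b = 1 := by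
  have hprod : (a - b) * (a + b - 1) = 0 := by linear_combination h
  have hsub : a - b ≠ 0 := sub_ne_zero.mpr hne
  exact eq_of_sub_eq_zero ((mul_eq_zero.mp hprod).resolve_left hsub)

theorem div_sub_mul_self_add_div_sub_mul_self {K : Type*} [Field K] {a b : K} (hne : a ≠ b) :
    a / (a - b) * a + b / (b - a) * b = a + b := by
  have hab : a - b ≠ 0 := sub_ne_zero.mpr hne
  have hba : b - a ≠ 0 := sub_ne_zero.mpr hne.symm
  field_simp
  ring

theorem rho_id_sum_eq_one_general (x y₁ y₂ : ℝ)
    (h1 : y₁ ^ 2 - y₁ - 3 = x) (h2 : y₂ ^ 2 - y₂ - 3 = x) (hne : y₁ ≠ y₂) :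
    (y₁ / (2 * y₁ - 1)) * y₁ + (y₂ / (2 * y₂ - 1)) * y₂ = 1 := by
  have hsum : y₁ + y₂ = 1 := add_eq_one_of_sq_sub_self_eq (by linarith) hne
  have hden₁ : 2 * y₁ - 1 = y₁ - y₂ := by linarith
  have hden₂ : 2 * y₂ - 1 = y₂ - y₁ := by linarith
  rw [hden₁, hden₂, div_sub_mul_self_add_div_sub_mul_self hne, hsum]

/-- For `f y = y^2 - y - 3` and `ρ y = y / (2y - 1)`: if `x > -13/4` and
`y₁, y₂` are the two real solutions of `f y = x`, then `ρ y₁ * y₁ + ρ y₂ * y₂ = 1`. -/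
theorem rho_id_sum_eq_one (x y₁ y₂ : ℝ)
    (hx : -13/4 < x)
    (h1 : y₁ ^ 2 - y₁ - 3 = x) (h2 : y₂ ^ 2 - y₂ - 3 = x) (hne : y₁ ≠ y₂) :
    (y₁ / (2 * y₁ - 1)) * y₁ + (y₂ / (2 * y₂ - 1)) * y₂ = 1 :=
  rho_id_sum_eq_one_general x y₁ y₂ h1 h2 hne
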